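/- arXiv:2403.09031 — 3 statements merged into one kernel-verified Lean document; each statement's English description precedes it below -/
import Mathlib

section
/- Let Z, Z⋆ ∈ ℂ^{n_s×r} with σ_min(Z⋆) > 0, let ε ≥ 0, and let P ∈ ℂ^{r×r} be invertible with √(‖Z − Z⋆P‖_F² + ‖Z − Z⋆P^{−T}‖_F²) ≤ ε·σ_min(Z⋆). Then ‖P − P^{−T}‖_F ≤ 2ε. (Key step in Part 2 of Lemma 1: any near-optimal alignment matrix is nearly complex orthogonal.) -/
open Matrix
open scoped BigOperators

noncomputable section

/-- Frobenius norm of a complex matrix. -/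
def frobNorm {m n : ℕ} (A : Matrix (Fin m) (Fin n) ℂ) : ℝ :=
  Real.sqrt (∑ i, ∑ j, ‖A i j‖ ^ 2)

/-- Euclidean (ℓ₂) norm of a complex vector. -/
def vecNorm {n : ℕ} (v : Fin n → ℂ) : ℝ :=
  Real.sqrt (∑ i, ‖v i‖ ^ 2)

/-- Smallest singular value of a complex matrix: infimum of `‖Av‖₂` over unit vectors `v`. -/
def sigmaMin {m n : ℕ} (A : Matrix (Fin m) (Fin n) ℂ) : ℝ :=
  sInf {t : ℝ | ∃ v : Fin n → ℂ, vecNorm v = 1 ∧ t = vecNorm (A.mulVec v)}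

lemma vecNorm_nonneg {n : ℕ} (v : Fin n → ℂ) : 0 ≤ vecNorm v := Real.sqrt_nonneg _

lemma frobNorm_nonneg {m n : ℕ} (A : Matrix (Fin m) (Fin n) ℂ) : 0 ≤ frobNorm A :=
  Real.sqrt_nonneg _

lemma vecNorm_eq_norm {n : ℕ} (v : Fin n → ℂ) :
    vecNorm v = ‖(WithLp.equiv 2 (Fin n → ℂ)).symm v‖ := by
  rw [EuclideanSpace.norm_eq]; rfl

lemma frobNorm_eq_norm {m n : ℕ} (A : Matrix (Fin m) (Fin n) ℂ) :
    frobNorm A = ‖(WithLp.equiv 2 (Fin m × Fin n → ℂ)).symm (fun p => A p.1 p.2)‖ := by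
  rw [frobNorm, EuclideanSpace.norm_eq, Fintype.sum_prod_type]; rfl

lemma frobNorm_sub_le {m n : ℕ} (A B : Matrix (Fin m) (Fin n) ℂ) :
    frobNorm (A - B) ≤ frobNorm A + frobNorm B := by
  rw [frobNorm_eq_norm, frobNorm_eq_norm, frobNorm_eq_norm]
  have h : (WithLp.equiv 2 (Fin m × Fin n → ℂ)).symm (fun p => (A - B) p.1 p.2)
      = (WithLp.equiv 2 (Fin m × Fin n → ℂ)).symm (fun p => A p.1 p.2)
        - (WithLp.equiv 2 (Fin m × Fin n → ℂ)).symm (fun p => B p.1 p.2) := rfl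
  rw [h]
  exact norm_sub_le _ _

lemma vecNorm_smul {n : ℕ} (c : ℂ) (v : Fin n → ℂ) :
    vecNorm (c • v) = ‖c‖ * vecNorm v := by
  rw [vecNorm_eq_norm, vecNorm_eq_norm]
  have h : (WithLp.equiv 2 (Fin n → ℂ)).symm (c • v)
      = c • (WithLp.equiv 2 (Fin n → ℂ)).symm v := rfl
  rw [h, norm_smul]

lemma vecNorm_pos {n : ℕ} {v : Fin n → ℂ} (hv : v ≠ 0) : 0 < vecNorm v := by
  rw [vecNorm_eq_norm]
  rw [norm_pos_iff]
  simpa using hv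

lemma sigmaMin_mulVec {m n : ℕ} (A : Matrix (Fin m) (Fin n) ℂ) (v : Fin n → ℂ) :
    sigmaMin A * vecNorm v ≤ vecNorm (A.mulVec v) := by
  by_cases hv : v = 0
  · subst hv
    simp [vecNorm, Matrix.mulVec_zero]
  · have hpos := vecNorm_pos hv
    set c : ℂ := ((vecNorm v : ℝ) : ℂ)⁻¹ with hc
    have hnc : ‖c‖ = (vecNorm v)⁻¹ := by
      rw [hc, norm_inv, Complex.norm_real, Real.norm_eq_abs, abs_of_pos hpos]
    have hu : vecNorm (c • v) = 1 := by
      rw [vecNorm_smul, hnc, inv_mul_cancel₀ (ne_of_gt hpos)]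
    have hmem : vecNorm (A.mulVec (c • v)) ∈
        {t : ℝ | ∃ w : Fin n → ℂ, vecNorm w = 1 ∧ t = vecNorm (A.mulVec w)} :=
      ⟨c • v, hu, rfl⟩
    have hbdd : BddBelow {t : ℝ | ∃ w : Fin n → ℂ, vecNorm w = 1 ∧ t = vecNorm (A.mulVec w)} := by
      refine ⟨0, ?_⟩
      rintro t ⟨w, -, rfl⟩
      exact vecNorm_nonneg _
    have hle : sigmaMin A ≤ vecNorm (A.mulVec (c • v)) := csInf_le hbdd hmem
    have heq : vecNorm (A.mulVec (c • v)) = (vecNorm v)⁻¹ * vecNorm (A.mulVec v) := by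
      rw [Matrix.mulVec_smul, vecNorm_smul, hnc]
    rw [heq] at hle
    calc sigmaMin A * vecNorm v ≤ ((vecNorm v)⁻¹ * vecNorm (A.mulVec v)) * vecNorm v :=
          mul_le_mul_of_nonneg_right hle (le_of_lt hpos)
      _ = vecNorm (A.mulVec v) := by field_simp

lemma vecNorm_sq {n : ℕ} (v : Fin n → ℂ) : vecNorm v ^ 2 = ∑ i, ‖v i‖ ^ 2 := by
  rw [vecNorm, Real.sq_sqrt]
  exact Finset.sum_nonneg fun i _ => sq_nonneg _

lemma frobNorm_sq {m n : ℕ} (A : Matrix (Fin m) (Fin n) ℂ) :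
    frobNorm A ^ 2 = ∑ i, ∑ j, ‖A i j‖ ^ 2 := by
  rw [frobNorm, Real.sq_sqrt]
  exact Finset.sum_nonneg fun i _ => Finset.sum_nonneg fun j _ => sq_nonneg _

lemma sigmaMin_frob {m n k : ℕ} (A : Matrix (Fin m) (Fin n) ℂ)
    (M : Matrix (Fin n) (Fin k) ℂ) :
    sigmaMin A * frobNorm M ≤ frobNorm (A * M) := by
  have hσ0 : 0 ≤ sigmaMin A := by
    apply Real.sInf_nonneg
    rintro t ⟨w, -, rfl⟩
    exact vecNorm_nonneg _
  have hsq : (sigmaMin A * frobNorm M) ^ 2 ≤ frobNorm (A * M) ^ 2 := by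
    have e1 : (∑ i, ∑ j, ‖M i j‖ ^ 2) = ∑ j, ∑ i, ‖M i j‖ ^ 2 := Finset.sum_comm
    have e2 : (∑ i, ∑ j, ‖(A * M) i j‖ ^ 2) = ∑ j, ∑ i, ‖(A * M) i j‖ ^ 2 :=
      Finset.sum_comm
    rw [mul_pow, frobNorm_sq, frobNorm_sq, e1, e2, Finset.mul_sum]
    apply Finset.sum_le_sum
    intro j _
    have h1 : sigmaMin A * vecNorm (fun i => M i j) ≤ vecNorm (A.mulVec (fun i => M i j)) :=
      sigmaMin_mulVec A _
    have h2 : (sigmaMin A * vecNorm (fun i => M i j)) ^ 2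
        ≤ vecNorm (A.mulVec (fun i => M i j)) ^ 2 := by
      apply pow_le_pow_left₀ (mul_nonneg hσ0 (vecNorm_nonneg _)) h1
    rw [mul_pow, vecNorm_sq, vecNorm_sq] at h2
    calc sigmaMin A ^ 2 * ∑ i, ‖M i j‖ ^ 2 ≤ ∑ i, ‖(A.mulVec fun i => M i j) i‖ ^ 2 := h2
      _ = ∑ i, ‖(A * M) i j‖ ^ 2 := by
          apply Finset.sum_congr rfl
          intro i _
          simp [Matrix.mulVec, Matrix.mul_apply, dotProduct]
  have h0 : 0 ≤ sigmaMin A * frobNorm M := mul_nonneg hσ0 (frobNorm_nonneg M)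
  nlinarith [frobNorm_nonneg (A * M)]

/-- Key step in Part 2 of Lemma 1: any near-optimal alignment matrix is nearly
complex orthogonal. -/
theorem near_optimal_alignment_nearly_orthogonal (ns r : ℕ)
    (Z Zs : Matrix (Fin ns) (Fin r) ℂ) (hσ : 0 < sigmaMin Zs)
    (ε : ℝ) (hε : 0 ≤ ε) (P : Matrix (Fin r) (Fin r) ℂ) (hP : IsUnit P)
    (hnear : Real.sqrt (frobNorm (Z - Zs * P) ^ 2 + frobNorm (Z - Zs * (P⁻¹)ᵀ) ^ 2)
      ≤ ε * sigmaMin Zs) :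
    frobNorm (P - (P⁻¹)ᵀ) ≤ 2 * ε := by
  set σ := sigmaMin Zs with hσdef
  set a := frobNorm (Z - Zs * P) with hadef
  set b := frobNorm (Z - Zs * (P⁻¹)ᵀ) with hbdef
  have ha0 : 0 ≤ a := frobNorm_nonneg _
  have hb0 : 0 ≤ b := frobNorm_nonneg _
  have ha : a ≤ ε * σ := by
    calc a = Real.sqrt (a ^ 2) := (Real.sqrt_sq ha0).symm
      _ ≤ Real.sqrt (a ^ 2 + b ^ 2) := Real.sqrt_le_sqrt (by nlinarith)
      _ ≤ ε * σ := hnear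
  have hb : b ≤ ε * σ := by
    calc b = Real.sqrt (b ^ 2) := (Real.sqrt_sq hb0).symm
      _ ≤ Real.sqrt (a ^ 2 + b ^ 2) := Real.sqrt_le_sqrt (by nlinarith)
      _ ≤ ε * σ := hnear
  have hfact : Zs * (P - (P⁻¹)ᵀ) = (Z - Zs * (P⁻¹)ᵀ) - (Z - Zs * P) := by
    rw [Matrix.mul_sub]
    abel
  have hkey : σ * frobNorm (P - (P⁻¹)ᵀ) ≤ a + b := by
    calc σ * frobNorm (P - (P⁻¹)ᵀ) ≤ frobNorm (Zs * (P - (P⁻¹)ᵀ)) := sigmaMin_frob _ _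
      _ = frobNorm ((Z - Zs * (P⁻¹)ᵀ) - (Z - Zs * P)) := by rw [hfact]
      _ ≤ b + a := frobNorm_sub_le _ _
      _ = a + b := by ring
  have : σ * frobNorm (P - (P⁻¹)ᵀ) ≤ σ * (2 * ε) := by
    calc σ * frobNorm (P - (P⁻¹)ᵀ) ≤ a + b := hkey
      _ ≤ 2 * ε * σ := by linarith
      _ = σ * (2 * ε) := by ring
  exact le_of_mul_le_mul_left this hσ
end
end

section
/- Cross-term lower bound (inequality (eq:distcontrac_opt_funda_term) in the proof of Lemma 3). Let Z⋆₁, Z⋆₂, Δ₁, Δ₂ ∈ ℂ^{n×r} and suppose (Z⋆₁)ᴴ·Δ₁ = Δ₂ᵀ·conj(Z⋆₂). Then ‖Δ₁·Z⋆₂ᵀ + Z⋆₁·Δ₂ᵀ‖_F² ≥ σ_min(Z⋆₂)²·‖Δ₁‖_F² + σ_min(Z⋆₁)²·‖Δ₂‖_F². (In particular, under this alignment condition the cross inner product Re⟨Δ₁Z⋆₂ᵀ, Z⋆₁Δ₂ᵀ⟩ is nonnegative.) -/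
open Matrix
open scoped BigOperators

noncomputable section

/-- Entrywise complex conjugate of a matrix. -/
def conjM {m n : ℕ} (A : Matrix (Fin m) (Fin n) ℂ) : Matrix (Fin m) (Fin n) ℂ :=
  A.map (starRingEnd ℂ)

/-!
Expand `‖A + B‖² = ‖A‖² + ‖B‖² + 2 Re tr(Aᴴ B)` for `A = Δ₁ Z₂ᵀ`, `B = Z₁ Δ₂ᵀ`. The rows of `A`
are `Z₂` applied to the rows of `Δ₁`, and the rows of `Bᵀ = Δ₂ Z₁ᵀ` are `Z₁` applied to the rows of
`Δ₂`, so the squared terms dominate `σ_min(Z₂)² ‖Δ₁‖²` and `σ_min(Z₁)² ‖Δ₂‖²`. By cyclicity of the trace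
and the alignment condition, `tr(Aᴴ B) = tr(Mᴴ M) = ‖M‖²` with `M = Z₁ᴴ Δ₁`, so the cross term is
nonnegative.
-/

lemma vecNorm_eq_norm_toLp {n : ℕ} (v : Fin n → ℂ) : vecNorm v = ‖WithLp.toLp 2 v‖ :=
  (EuclideanSpace.norm_eq _).symm

lemma sigmaMin_nonneg {m n : ℕ} (A : Matrix (Fin m) (Fin n) ℂ) : 0 ≤ sigmaMin A :=
  Real.sInf_nonneg <| by rintro t ⟨v, -, rfl⟩; exact vecNorm_nonneg _

lemma sigmaMin_mul_vecNorm_le {m n : ℕ} (A : Matrix (Fin m) (Fin n) ℂ) (v : Fin n → ℂ) :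
    sigmaMin A * vecNorm v ≤ vecNorm (A *ᵥ v) := by
  rcases (vecNorm_nonneg v).eq_or_lt with hv | hv
  · rw [← hv, mul_zero]; exact vecNorm_nonneg _
  have hc : ‖((vecNorm v : ℂ))⁻¹‖ = (vecNorm v)⁻¹ := by
    rw [norm_inv, Complex.norm_real, Real.norm_of_nonneg hv.le]
  have hunit : vecNorm ((vecNorm v : ℂ)⁻¹ • v) = 1 := by
    rw [vecNorm_smul, hc, inv_mul_cancel₀ hv.ne']
  have hbdd : BddBelow {t : ℝ | ∃ w : Fin n → ℂ, vecNorm w = 1 ∧ t = vecNorm (A *ᵥ w)} :=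
    ⟨0, by rintro t ⟨w, -, rfl⟩; exact vecNorm_nonneg _⟩
  have hle := csInf_le hbdd ⟨_, hunit, rfl⟩
  rw [mulVec_smul, vecNorm_smul, hc] at hle
  rwa [← le_div_iff₀ hv, div_eq_inv_mul]

lemma frobNorm_sq_eq_sum_vecNorm_sq {m n : ℕ} (A : Matrix (Fin m) (Fin n) ℂ) :
    frobNorm A ^ 2 = ∑ i, vecNorm (A i) ^ 2 := by
  simp only [frobNorm_sq, vecNorm_eq_norm_toLp, EuclideanSpace.norm_sq_eq]

lemma frobNorm_transpose {m n : ℕ} (A : Matrix (Fin m) (Fin n) ℂ) : frobNorm Aᵀ = frobNorm A := by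
  rw [frobNorm, frobNorm, Finset.sum_comm]; rfl

lemma frobNorm_sq_eq_re_trace {m n : ℕ} (A : Matrix (Fin m) (Fin n) ℂ) :
    frobNorm A ^ 2 = (trace (Aᴴ * A)).re := by
  simp only [frobNorm_sq, trace, diag, mul_apply, conjTranspose_apply, Complex.re_sum,
    Complex.star_def, Complex.conj_mul', ← Complex.ofReal_pow, Complex.ofReal_re]
  exact Finset.sum_comm

lemma frobNorm_add_sq {m n : ℕ} (A B : Matrix (Fin m) (Fin n) ℂ) :
    frobNorm (A + B) ^ 2 = frobNorm A ^ 2 + frobNorm B ^ 2 + 2 * (trace (Aᴴ * B)).re := by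
  have hsymm : (trace (Bᴴ * A)).re = (trace (Aᴴ * B)).re := by
    rw [← conjTranspose_conjTranspose A, ← conjTranspose_mul, trace_conjTranspose,
      conjTranspose_conjTranspose, Complex.star_def, Complex.conj_re]
  rw [frobNorm_sq_eq_re_trace, frobNorm_sq_eq_re_trace, frobNorm_sq_eq_re_trace,
    conjTranspose_add, Matrix.add_mul, Matrix.mul_add, Matrix.mul_add, trace_add, trace_add,
    trace_add, Complex.add_re, Complex.add_re, Complex.add_re, hsymm]
  ring

lemma sigmaMin_sq_mul_frobNorm_sq_le {m n k : ℕ} (Z : Matrix (Fin m) (Fin k) ℂ)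
    (D : Matrix (Fin n) (Fin k) ℂ) :
    sigmaMin Z ^ 2 * frobNorm D ^ 2 ≤ frobNorm (D * Zᵀ) ^ 2 := by
  rw [frobNorm_sq_eq_sum_vecNorm_sq, frobNorm_sq_eq_sum_vecNorm_sq, Finset.mul_sum]
  refine Finset.sum_le_sum fun i _ => ?_
  rw [← mul_pow, mul_apply_eq_vecMul, vecMul_transpose]
  exact pow_le_pow_left₀ (mul_nonneg (sigmaMin_nonneg Z) (vecNorm_nonneg _))
    (sigmaMin_mul_vecNorm_le Z (D i)) 2

lemma trace_conjTranspose_mul_eq_trace_conjTranspose_mul_self {n m r : ℕ}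
    {Z₁ Δ₁ : Matrix (Fin n) (Fin r) ℂ} {Z₂ Δ₂ : Matrix (Fin m) (Fin r) ℂ}
    (halign : Z₁ᴴ * Δ₁ = Δ₂ᵀ * conjM Z₂) :
    trace ((Δ₁ * Z₂ᵀ)ᴴ * (Z₁ * Δ₂ᵀ)) = trace ((Z₁ᴴ * Δ₁)ᴴ * (Z₁ᴴ * Δ₁)) := by
  have hconj : Z₂ᵀᴴ = conjM Z₂ := rfl
  rw [conjTranspose_mul, hconj, Matrix.mul_assoc, trace_mul_comm, Matrix.mul_assoc,
    Matrix.mul_assoc, ← halign, conjTranspose_mul, conjTranspose_conjTranspose, Matrix.mul_assoc]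

/-- Cross-term lower bound: if `(Z⋆₁)ᴴΔ₁ = Δ₂ᵀ·conj(Z⋆₂)`, then
`‖Δ₁Z⋆₂ᵀ + Z⋆₁Δ₂ᵀ‖_F² ≥ σ_min(Z⋆₂)²‖Δ₁‖_F² + σ_min(Z⋆₁)²‖Δ₂‖_F²`; in particular
the cross inner product `Re⟨Δ₁Z⋆₂ᵀ, Z⋆₁Δ₂ᵀ⟩` is nonnegative. -/
theorem cross_term_lower_bound (n r : ℕ)
    (Zs₁ Zs₂ Δ₁ Δ₂ : Matrix (Fin n) (Fin r) ℂ)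
    (halign : Zs₁ᴴ * Δ₁ = Δ₂ᵀ * conjM Zs₂) :
    (frobNorm (Δ₁ * Zs₂ᵀ + Zs₁ * Δ₂ᵀ) ^ 2
        ≥ sigmaMin Zs₂ ^ 2 * frobNorm Δ₁ ^ 2 + sigmaMin Zs₁ ^ 2 * frobNorm Δ₂ ^ 2)
    ∧ 0 ≤ (Matrix.trace ((Δ₁ * Zs₂ᵀ)ᴴ * (Zs₁ * Δ₂ᵀ))).re := by
  have hcross : 0 ≤ (trace ((Δ₁ * Zs₂ᵀ)ᴴ * (Zs₁ * Δ₂ᵀ))).re := by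
    rw [trace_conjTranspose_mul_eq_trace_conjTranspose_mul_self halign,
      ← frobNorm_sq_eq_re_trace]
    positivity
  have h₁ := sigmaMin_sq_mul_frobNorm_sq_le Zs₂ Δ₁
  have h₂ := sigmaMin_sq_mul_frobNorm_sq_le Zs₁ Δ₂
  rw [← frobNorm_transpose (Δ₂ * Zs₁ᵀ), transpose_mul, transpose_transpose] at h₂
  refine ⟨?_, hcross⟩
  rw [frobNorm_add_sq]
  linarith
end
end

section
/- Hankel-basis inner product bound (used in the proof of Lemma 8). Let n_s ≥ 1, n = 2n_s − 1, and let H_a ∈ ℂ^{n_s×n_s} be the Hankel basis matrix for a ∈ {0,…,n−1}. Then for all r ≥ 1, all A, B ∈ ℂ^{n_s×r}, and all a ∈ {0,…,n−1}: |⟨A·Bᵀ, H_a⟩| ≤ min( ‖A‖_F·‖B‖_{2,∞}, ‖A‖_{2,∞}·‖B‖_F ). -/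
open Matrix
open scoped BigOperators

noncomputable section

/-- `‖A‖_{2,∞}`: the largest ℓ₂ norm of the rows of `A`. -/
def norm2inf {m n : ℕ} (A : Matrix (Fin m) (Fin n) ℂ) : ℝ :=
  ⨆ i, vecNorm (A i)

/-- `w_a`: the length of the `a`-th skew diagonal of an `n_s × n_s` matrix. -/
def hw (ns : ℕ) (a : ℕ) : ℕ :=
  (Finset.univ.filter (fun p : Fin ns × Fin ns => (p.1 : ℕ) + (p.2 : ℕ) = a)).card

/-- The Hankel basis matrix `H_a` with entries `1/√(w_a)` on the `a`-th skew
diagonal and `0` elsewhere. -/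
def hankelBasis (ns : ℕ) (a : ℕ) : Matrix (Fin ns) (Fin ns) ℂ :=
  fun i j => if (i : ℕ) + (j : ℕ) = a then ((1 / Real.sqrt (hw ns a) : ℝ) : ℂ) else 0

lemma norm2inf_nonneg {m n : ℕ} (A : Matrix (Fin m) (Fin n) ℂ) : 0 ≤ norm2inf A :=
  Real.iSup_nonneg fun _ => vecNorm_nonneg _

lemma vecNorm_le_norm2inf {m n : ℕ} (A : Matrix (Fin m) (Fin n) ℂ) (i : Fin m) :
    vecNorm (A i) ≤ norm2inf A :=
  le_ciSup (f := fun i => vecNorm (A i)) (Set.finite_range _).bddAbove i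

lemma frobNorm_eq_sqrt_sum_sq_vecNorm {m n : ℕ} (A : Matrix (Fin m) (Fin n) ℂ) :
    frobNorm A = Real.sqrt (∑ i, vecNorm (A i) ^ 2) := by
  simp only [frobNorm, vecNorm, Real.sq_sqrt (Finset.sum_nonneg fun _ _ => sq_nonneg _)]

lemma norm_mul_transpose_apply_le {m n r : ℕ} (A : Matrix (Fin m) (Fin r) ℂ)
    (B : Matrix (Fin n) (Fin r) ℂ) (i : Fin m) (j : Fin n) :
    ‖(A * Bᵀ) i j‖ ≤ vecNorm (A i) * vecNorm (B j) :=
  calc ‖(A * Bᵀ) i j‖ = ‖∑ k, A i k * B j k‖ := by simp only [mul_apply, transpose_apply]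
    _ ≤ ∑ k, ‖A i k‖ * ‖B j k‖ := (norm_sum_le _ _).trans_eq (by simp only [norm_mul])
    _ ≤ vecNorm (A i) * vecNorm (B j) := Real.sum_mul_le_sqrt_mul_sqrt _ _ _

lemma trace_transpose_conjTranspose_mul_of_isSymm {n R : Type*} [Fintype n] [CommSemiring R]
    [Star R] (M H : Matrix n n R) (hH : H.IsSymm) : trace (Mᵀᴴ * H) = trace (Mᴴ * H) := by
  conv_lhs => rw [conjTranspose_transpose_eq_transpose_conjTranspose, ← hH.eq, ← transpose_mul,
    trace_transpose, trace_mul_comm]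

lemma isSymm_hankelBasis (ns a : ℕ) : (hankelBasis ns a).IsSymm := by
  ext i j
  simp only [transpose_apply, hankelBasis, Nat.add_comm]

def skewDiag (ns a : ℕ) : Finset (Fin ns × Fin ns) :=
  Finset.univ.filter fun p => (p.1 : ℕ) + (p.2 : ℕ) = a

lemma card_skewDiag (ns a : ℕ) : (skewDiag ns a).card = hw ns a := rfl

lemma injOn_fst_skewDiag (ns a : ℕ) :
    Set.InjOn Prod.fst (skewDiag ns a : Set (Fin ns × Fin ns)) := by
  intro p hp q hq hpq
  simp only [skewDiag, Finset.coe_filter, Finset.mem_univ, true_and, Set.mem_ofPred_eq] at hp hq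
  have : (p.1 : ℕ) = q.1 := congrArg Fin.val hpq
  exact Prod.ext hpq (Fin.ext (by omega))

lemma trace_conjTranspose_mul_hankelBasis {ns : ℕ} (M : Matrix (Fin ns) (Fin ns) ℂ) (a : ℕ) :
    trace (Mᴴ * hankelBasis ns a)
      = ((1 / Real.sqrt (hw ns a) : ℝ) : ℂ) * ∑ p ∈ skewDiag ns a, star (M p.1 p.2) := by
  simp only [trace, diag, mul_apply, conjTranspose_apply, hankelBasis, skewDiag,
    Finset.sum_filter, Finset.mul_sum]
  rw [Finset.sum_comm, ← Finset.univ_product_univ, Finset.sum_product]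
  refine Finset.sum_congr rfl fun i _ => Finset.sum_congr rfl fun j _ => ?_
  split_ifs <;> simp [mul_comm]

lemma sum_skewDiag_fst_le {ns : ℕ} (a : ℕ) (f : Fin ns → ℝ) (hf : ∀ i, 0 ≤ f i) :
    ∑ p ∈ skewDiag ns a, f p.1 ≤ Real.sqrt (hw ns a) * Real.sqrt (∑ i, f i ^ 2) := by
  have hsq : ∑ p ∈ skewDiag ns a, f p.1 ^ 2 ≤ ∑ i, f i ^ 2 := by
    rw [← Finset.sum_image (g := Prod.fst) (f := fun i => f i ^ 2) (injOn_fst_skewDiag ns a)]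
    exact Finset.sum_le_univ_sum_of_nonneg fun _ => sq_nonneg _
  calc ∑ p ∈ skewDiag ns a, f p.1
      = Real.sqrt ((∑ p ∈ skewDiag ns a, f p.1) ^ 2) :=
        (Real.sqrt_sq (Finset.sum_nonneg fun _ _ => hf _)).symm
    _ ≤ Real.sqrt (hw ns a * ∑ p ∈ skewDiag ns a, f p.1 ^ 2) :=
        Real.sqrt_le_sqrt (card_skewDiag ns a ▸ sq_sum_le_card_mul_sum_sq)
    _ ≤ Real.sqrt (hw ns a) * Real.sqrt (∑ i, f i ^ 2) := by
        rw [Real.sqrt_mul (Nat.cast_nonneg _)]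
        gcongr

lemma norm_trace_mul_hankelBasis_le {ns r : ℕ} (A B : Matrix (Fin ns) (Fin r) ℂ) (a : ℕ) :
    ‖trace ((A * Bᵀ)ᴴ * hankelBasis ns a)‖ ≤ frobNorm A * norm2inf B := by
  set w := Real.sqrt (hw ns a)
  have hentry : ∀ p ∈ skewDiag ns a, ‖star ((A * Bᵀ) p.1 p.2)‖ ≤ vecNorm (A p.1) * norm2inf B :=
    fun p _ => (norm_star _).trans_le <| (norm_mul_transpose_apply_le A B p.1 p.2).trans <|
      mul_le_mul_of_nonneg_left (vecNorm_le_norm2inf B p.2) (vecNorm_nonneg _)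
  rw [trace_conjTranspose_mul_hankelBasis, norm_mul, Complex.norm_real,
    Real.norm_of_nonneg (by positivity)]
  calc 1 / w * ‖∑ p ∈ skewDiag ns a, star ((A * Bᵀ) p.1 p.2)‖
      ≤ 1 / w * ((∑ p ∈ skewDiag ns a, vecNorm (A p.1)) * norm2inf B) := by
        rw [Finset.sum_mul]
        gcongr
        exact (norm_sum_le _ _).trans (Finset.sum_le_sum hentry)
    _ ≤ 1 / w * (w * frobNorm A * norm2inf B) := by
        rw [frobNorm_eq_sqrt_sum_sq_vecNorm]
        gcongr
        · exact norm2inf_nonneg B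
        · exact sum_skewDiag_fst_le a _ fun i => vecNorm_nonneg _
    _ = w / w * (frobNorm A * norm2inf B) := by ring
    -- `w / w = 0` when the skew diagonal is empty
    _ ≤ frobNorm A * norm2inf B :=
        mul_le_of_le_one_left (mul_nonneg (Real.sqrt_nonneg _) (norm2inf_nonneg B))
          (div_self_le_one w)

theorem hankel_basis_inner_bound_general (ns r : ℕ)
    (A B : Matrix (Fin ns) (Fin r) ℂ) (a : Fin (2 * ns - 1)) :
    ‖Matrix.trace ((A * Bᵀ)ᴴ * hankelBasis ns (a : ℕ))‖
      ≤ min (frobNorm A * norm2inf B) (norm2inf A * frobNorm B) := by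
  refine le_min (norm_trace_mul_hankelBasis_le A B a) ?_
  have hswap : B * Aᵀ = (A * Bᵀ)ᵀ := by rw [transpose_mul, transpose_transpose]
  calc ‖trace ((A * Bᵀ)ᴴ * hankelBasis ns a)‖ = ‖trace ((B * Aᵀ)ᴴ * hankelBasis ns a)‖ := by
        rw [hswap, trace_transpose_conjTranspose_mul_of_isSymm _ _ (isSymm_hankelBasis ns a)]
    _ ≤ frobNorm B * norm2inf A := norm_trace_mul_hankelBasis_le B A a
    _ = norm2inf A * frobNorm B := mul_comm _ _

/-- Hankel-basis inner product bound:
`|⟨ABᵀ, H_a⟩| ≤ min(‖A‖_F·‖B‖_{2,∞}, ‖A‖_{2,∞}·‖B‖_F)`. -/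
theorem hankel_basis_inner_bound (ns r : ℕ) (hns : 1 ≤ ns) (hr : 1 ≤ r)
    (A B : Matrix (Fin ns) (Fin r) ℂ) (a : Fin (2 * ns - 1)) :
    ‖Matrix.trace ((A * Bᵀ)ᴴ * hankelBasis ns (a : ℕ))‖
      ≤ min (frobNorm A * norm2inf B) (norm2inf A * frobNorm B) :=
  hankel_basis_inner_bound_general ns r A B a
end
end
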